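/- Let u₀ : ℝ → ℂ be a Schwartz function and ζ ∈ ℝ. Set P(x) = [[0, u₀(x)],[−conj(u₀(x)), 0]] and Λ = diag(1,−1). Then the matrix Volterra equation G(x) = I − ∫ₓ^∞ exp(−iζ(x−ξ)Λ)·P(ξ)G(ξ)·exp(iζ(x−ξ)Λ) dξ has a unique bounded continuous solution G : [0,∞) → M₂(ℂ); this solution satisfies det G(x) = 1 for all x ≥ 0, together with the symmetries G₁₁(x) = conj(G₂₂(x)) and G₂₁(x) = −conj(G₁₂(x)); consequently the spectral functions y(ζ) = G₂₂(0) and z(ζ) = G₁₂(0) satisfy |y(ζ)|² + |z(ζ)|² = 1. -/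

import Mathlib

open MeasureTheory Matrix

/-- `P(x) = [[0, u₀(x)],[−conj(u₀(x)), 0]]`. -/
noncomputable def Pm (u₀ : SchwartzMap ℝ ℂ) (x : ℝ) : Matrix (Fin 2) (Fin 2) ℂ :=
  !![0, u₀ x; -(starRingEnd ℂ) (u₀ x), 0]

/-- The integrand `exp(−iζ(x−ξ)Λ) · P(ξ)G(ξ) · exp(iζ(x−ξ)Λ)`, where
`exp(cΛ) = diag(e^c, e^{−c})` for `Λ = diag(1,−1)`. -/
noncomputable def Km (u₀ : SchwartzMap ℝ ℂ) (ζ : ℂ) (G : ℝ → Matrix (Fin 2) (Fin 2) ℂ)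
    (x ξ : ℝ) : Matrix (Fin 2) (Fin 2) ℂ :=
  !![Complex.exp (-(Complex.I * ζ * ((x - ξ : ℝ) : ℂ))), 0;
     0, Complex.exp (Complex.I * ζ * ((x - ξ : ℝ) : ℂ))] *
    (Pm u₀ ξ * G ξ) *
    !![Complex.exp (Complex.I * ζ * ((x - ξ : ℝ) : ℂ)), 0;
       0, Complex.exp (-(Complex.I * ζ * ((x - ξ : ℝ) : ℂ)))]

/-- `G` is a bounded continuous solution on `[0,∞)` of the matrix Volterra equation
`G(x) = I − ∫ₓ^∞ exp(−iζ(x−ξ)Λ)·P(ξ)G(ξ)·exp(iζ(x−ξ)Λ) dξ` (entrywise, with absolutely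
convergent integrals). -/
def IsMatrixVolterraSol (u₀ : SchwartzMap ℝ ℂ) (ζ : ℂ)
    (G : ℝ → Matrix (Fin 2) (Fin 2) ℂ) : Prop :=
  (∀ i j : Fin 2, ContinuousOn (fun x => G x i j) (Set.Ici 0)) ∧
  (∃ C : ℝ, ∀ x ≥ (0 : ℝ), ∀ i j : Fin 2, ‖G x i j‖ ≤ C) ∧
  ∀ x ≥ (0 : ℝ), ∀ i j : Fin 2,
    IntegrableOn (fun ξ => Km u₀ ζ G x ξ i j) (Set.Ioi x) ∧
    G x i j = (1 : Matrix (Fin 2) (Fin 2) ℂ) i j - ∫ ξ in Set.Ioi x, Km u₀ ζ G x ξ i j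

/-!
Write `ρ(x) = exp (2 ∫ₓ^∞ |u₀|)`, so that `∫ₓ^∞ |u₀| ρ = (ρ(x) - 1) / 2`. Substituting
`G = ρ F`, the equation becomes a fixed-point problem for bounded continuous `F` whose Volterra
operator is a contraction of ratio `1/2` in the sup norm; this gives existence. The same identity,
iterated, gives a backward Gronwall inequality, hence uniqueness among bounded solutions.

Differentiating the equation gives `G' = -iζ[Λ, G] + P G`, so `(det G)' = tr P · det G = 0`, and
`det G → det I = 1` at infinity. For real `ζ` the map `M ↦ (adj M)ᴴ` is multiplicative and fixes
`P(ξ)` and `exp(±iζtΛ)`, so it maps solutions to solutions; by uniqueness `G = (adj G)ᴴ`, which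
gives the two symmetries and `det G(0) = |G₂₂(0)|² + |G₁₂(0)|²`.
-/

open Set Filter Topology
open scoped NNReal

section TailIntegral

variable {E : Type*} [NormedAddCommGroup E] [NormedSpace ℝ E] {f : ℝ → E}

theorem integral_Ioi_eq_sub_intervalIntegral (hf : Integrable f) (x : ℝ) :
    ∫ ξ in Ioi x, f ξ = (∫ ξ in Ioi 0, f ξ) - ∫ ξ in 0..x, f ξ :=
  eq_sub_of_add_eq' (intervalIntegral.integral_interval_add_Ioi hf.integrableOn hf.integrableOn)

theorem tendsto_integral_Ioi_atTop (hf : Integrable f) :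
    Tendsto (fun x => ∫ ξ in Ioi x, f ξ) atTop (𝓝 0) := by
  rw [funext (integral_Ioi_eq_sub_intervalIntegral hf)]
  simpa using (intervalIntegral_tendsto_integral_Ioi 0 hf.integrableOn tendsto_id).const_sub
    (∫ ξ in Ioi 0, f ξ)

theorem hasDerivAt_integral_Ioi [CompleteSpace E] (hf : Integrable f) (hfc : Continuous f)
    (x : ℝ) : HasDerivAt (fun x => ∫ ξ in Ioi x, f ξ) (-f x) x := by
  rw [funext (integral_Ioi_eq_sub_intervalIntegral hf)]
  exact (intervalIntegral.integral_hasDerivAt_right hf.intervalIntegrable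
    hfc.stronglyMeasurable.stronglyMeasurableAtFilter hfc.continuousAt).const_sub _

end TailIntegral

section TailWeight

variable {a : ℝ → ℝ}

noncomputable def tailWeight (a : ℝ → ℝ) (x : ℝ) : ℝ := Real.exp (2 * ∫ ξ in Ioi x, a ξ)

theorem tailWeight_pos (x : ℝ) : 0 < tailWeight a x := Real.exp_pos _

theorem one_le_tailWeight (ha₀ : ∀ x, 0 ≤ a x) (x : ℝ) : 1 ≤ tailWeight a x :=
  Real.one_le_exp (by
    linarith [setIntegral_nonneg (μ := volume) (measurableSet_Ioi (a := x)) fun ξ _ => ha₀ ξ])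

theorem tailWeight_le (ha : Integrable a) (ha₀ : ∀ x, 0 ≤ a x) (x : ℝ) :
    tailWeight a x ≤ Real.exp (2 * ∫ ξ, a ξ) :=
  Real.exp_le_exp.2 (by linarith [setIntegral_le_integral ha (.of_forall ha₀) (s := Ioi x)])

theorem hasDerivAt_tailWeight (ha : Integrable a) (hac : Continuous a) (x : ℝ) :
    HasDerivAt (tailWeight a) (-(2 * a x * tailWeight a x)) x := by
  unfold tailWeight
  convert ((hasDerivAt_integral_Ioi ha hac x).const_mul 2).exp using 1
  ring

theorem continuous_tailWeight (ha : Integrable a) (hac : Continuous a) :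
    Continuous (tailWeight a) :=
  continuous_iff_continuousAt.2 fun x => (hasDerivAt_tailWeight ha hac x).continuousAt

theorem tendsto_tailWeight_atTop (ha : Integrable a) : Tendsto (tailWeight a) atTop (𝓝 1) := by
  unfold tailWeight
  simpa using ((tendsto_integral_Ioi_atTop ha).const_mul 2).rexp

theorem integrable_mul_tailWeight (ha : Integrable a) (hac : Continuous a)
    (ha₀ : ∀ x, 0 ≤ a x) :
    Integrable fun ξ => a ξ * tailWeight a ξ :=
  ha.mul_bdd (continuous_tailWeight ha hac).aestronglyMeasurable
    (.of_forall fun ξ => by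
      rw [Real.norm_of_nonneg (tailWeight_pos ξ).le]; exact tailWeight_le ha ha₀ ξ)

theorem integral_Ioi_mul_tailWeight (ha : Integrable a) (hac : Continuous a)
    (ha₀ : ∀ x, 0 ≤ a x) (x : ℝ) :
    ∫ ξ in Ioi x, a ξ * tailWeight a ξ = (tailWeight a x - 1) / 2 := by
  have hderiv (ξ : ℝ) : HasDerivAt (fun t => -tailWeight a t / 2) (a ξ * tailWeight a ξ) ξ := by
    refine ((hasDerivAt_tailWeight ha hac ξ).neg.div_const 2).congr_deriv ?_
    ring
  rw [integral_Ioi_of_hasDerivAt_of_tendsto' (fun ξ _ => hderiv ξ)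
    (integrable_mul_tailWeight ha hac ha₀).integrableOn
    ((tendsto_tailWeight_atTop ha).neg.div_const 2)]
  ring

theorem integrableOn_Ioi_mul_of_bounded {f : ℝ → ℝ} {C : ℝ} (ha : Integrable a)
    (hf : ContinuousOn f (Ici 0)) (hfC : ∀ x ≥ 0, ‖f x‖ ≤ C) {x : ℝ} (hx : 0 ≤ x) :
    IntegrableOn (fun ξ => a ξ * f ξ) (Ioi x) :=
  ha.integrableOn.mul_bdd ((hf.mono fun _ hξ => hx.trans (le_of_lt hξ)).aestronglyMeasurable
    measurableSet_Ioi)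
    ((ae_restrict_iff' measurableSet_Ioi).2 (.of_forall fun ξ hξ => hfC ξ (hx.trans hξ.le)))

/-- Backward Gronwall inequality: iterating `f ≤ ∫ₓ^∞ a f` gives `f ≤ C 2⁻ⁿ tailWeight a`. -/
theorem eq_zero_of_le_integral_Ioi_mul {f : ℝ → ℝ} {C : ℝ} (ha : Integrable a)
    (hac : Continuous a) (ha₀ : ∀ x, 0 ≤ a x) (hf : ContinuousOn f (Ici 0))
    (hf₀ : ∀ x ≥ 0, 0 ≤ f x) (hfC : ∀ x ≥ 0, f x ≤ C)
    (hle : ∀ x ≥ 0, f x ≤ ∫ ξ in Ioi x, a ξ * f ξ) {x : ℝ} (hx : 0 ≤ x) : f x = 0 := by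
  have hC : 0 ≤ C := (hf₀ 0 le_rfl).trans (hfC 0 le_rfl)
  have hbound (n : ℕ) : ∀ x ≥ 0, f x ≤ C * 2⁻¹ ^ n * tailWeight a x := by
    induction n with
    | zero =>
      intro x hx
      simpa using (hfC x hx).trans (le_mul_of_one_le_right hC (one_le_tailWeight ha₀ x))
    | succ n ih =>
      intro x hx
      have hfint : IntegrableOn (fun ξ => a ξ * f ξ) (Ioi x) :=
        integrableOn_Ioi_mul_of_bounded ha hf
          (fun ξ hξ => by rw [Real.norm_of_nonneg (hf₀ ξ hξ)]; exact hfC ξ hξ) hx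
      calc f x ≤ ∫ ξ in Ioi x, a ξ * f ξ := hle x hx
        _ ≤ ∫ ξ in Ioi x, a ξ * tailWeight a ξ * (C * 2⁻¹ ^ n) := by
          refine setIntegral_mono_on hfint
            ((integrable_mul_tailWeight ha hac ha₀).integrableOn.mul_const _) measurableSet_Ioi
            fun ξ hξ => ?_
          rw [mul_assoc, mul_comm (tailWeight a ξ)]
          exact mul_le_mul_of_nonneg_left (ih ξ (hx.trans hξ.le)) (ha₀ ξ)
        _ = C * 2⁻¹ ^ n * ((tailWeight a x - 1) / 2) := by
          rw [integral_mul_const, integral_Ioi_mul_tailWeight ha hac ha₀, mul_comm]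
        _ ≤ C * 2⁻¹ ^ (n + 1) * tailWeight a x := by
          rw [pow_succ]
          nlinarith [mul_nonneg hC (pow_nonneg (by norm_num : (0 : ℝ) ≤ 2⁻¹) n)]
  have hlim : Tendsto (fun n : ℕ => C * 2⁻¹ ^ n * tailWeight a x) atTop (𝓝 0) := by
    simpa using ((tendsto_pow_atTop_nhds_zero_of_lt_one (r := (2⁻¹ : ℝ)) (by norm_num)
      (by norm_num)).const_mul C).mul_const (tailWeight a x)
  exact le_antisymm (ge_of_tendsto hlim (.of_forall fun n => hbound n x hx)) (hf₀ x hx)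

end TailWeight

namespace Matrix

theorem adjugate_conjTranspose_mul {n α : Type*} [Fintype n] [DecidableEq n] [CommRing α]
    [StarRing α] (A B : Matrix n n α) : (A * B).adjugateᴴ = A.adjugateᴴ * B.adjugateᴴ := by
  rw [adjugate_mul_distrib, conjTranspose_mul]

theorem adjugate_conjTranspose_one {n α : Type*} [Fintype n] [DecidableEq n] [CommRing α]
    [StarRing α] : (1 : Matrix n n α).adjugateᴴ = 1 := by
  rw [adjugate_one, conjTranspose_one]

theorem adjugate_conjTranspose_apply_fin_two {α : Type*} [CommRing α] [StarRing α]
    (M : Matrix (Fin 2) (Fin 2) α) (i j : Fin 2) :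
    M.adjugateᴴ i j = (if i = j then 1 else -1) * star (M (i + 1) (j + 1)) := by
  rw [adjugate_fin_two]
  fin_cases i <;> fin_cases j <;> simp

theorem apply_eq_of_adjugate_conjTranspose_eq {M : Matrix (Fin 2) (Fin 2) ℂ}
    (h : M.adjugateᴴ = M) :
    M 0 0 = (starRingEnd ℂ) (M 1 1) ∧ M 1 0 = -(starRingEnd ℂ) (M 0 1) := by
  have h₀₀ := congrFun₂ h 0 0
  have h₁₀ := congrFun₂ h 1 0
  simp only [adjugate_conjTranspose_apply_fin_two] at h₀₀ h₁₀
  simp at h₀₀ h₁₀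
  exact ⟨h₀₀.symm, h₁₀.symm⟩

theorem det_eq_norm_sq_add_norm_sq {M : Matrix (Fin 2) (Fin 2) ℂ}
    (h : M.adjugateᴴ = M) : M.det = ((‖M 1 1‖ ^ 2 + ‖M 0 1‖ ^ 2 : ℝ) : ℂ) := by
  obtain ⟨h₀₀, h₁₀⟩ := apply_eq_of_adjugate_conjTranspose_eq h
  push_cast
  rw [det_fin_two, h₀₀, h₁₀, ← Complex.mul_conj', ← Complex.mul_conj']
  ring

end Matrix

namespace MatrixVolterra

open Complex BoundedContinuousFunction

/-- Conjugation by `exp(-iζtΛ)` multiplies the `(i,j)` entry by `phase ζ i j t`;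
here `phaseSign i j = (λⱼ - λᵢ) / 2` for `Λ = diag(λ₀, λ₁) = diag(1, -1)`. -/
def phaseSign : Matrix (Fin 2) (Fin 2) ℂ := !![0, -1; 1, 0]

noncomputable def phase (ζ : ℝ) (i j : Fin 2) (t : ℝ) : ℂ :=
  exp (phaseSign i j * (2 * I * ζ * t))

noncomputable def volterraIntegral (u₀ : SchwartzMap ℝ ℂ) (ζ : ℝ)
    (G : ℝ → Matrix (Fin 2) (Fin 2) ℂ) (x : ℝ) : Matrix (Fin 2) (Fin 2) ℂ :=
  Matrix.of fun i j => ∫ ξ in Ioi x, Km u₀ ζ G x ξ i j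

variable {u₀ : SchwartzMap ℝ ℂ} {ζ : ℝ} {G H : ℝ → Matrix (Fin 2) (Fin 2) ℂ} {M : ℝ}

theorem norm_phase (i j : Fin 2) (t : ℝ) : ‖phase ζ i j t‖ = 1 := by
  fin_cases i <;> fin_cases j <;> simp [phase, phaseSign, norm_exp]

theorem phase_add (i j : Fin 2) (s t : ℝ) :
    phase ζ i j (s + t) = phase ζ i j s * phase ζ i j t := by
  rw [phase, phase, phase, ← exp_add]
  push_cast
  ring_nf

theorem phase_zero (i j : Fin 2) : phase ζ i j 0 = 1 := by simp [phase]

theorem hasDerivAt_phase (i j : Fin 2) (t : ℝ) :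
    HasDerivAt (phase ζ i j) (phaseSign i j * (2 * I * ζ) * phase ζ i j t) t := by
  have h : HasDerivAt (fun s : ℂ => phaseSign i j * (2 * I * ζ * s))
      (phaseSign i j * (2 * I * ζ)) t := by
    simpa using ((hasDerivAt_id (t : ℂ)).const_mul (2 * I * ζ)).const_mul (phaseSign i j)
  exact h.cexp.comp_ofReal.congr_deriv (mul_comm _ _)

theorem continuous_phase (i j : Fin 2) : Continuous (phase ζ i j) :=
  continuous_iff_continuousAt.2 fun t => (hasDerivAt_phase i j t).continuousAt

theorem phaseSign_mul_one_apply (i j : Fin 2) :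
    phaseSign i j * (1 : Matrix (Fin 2) (Fin 2) ℂ) i j = 0 := by
  fin_cases i <;> fin_cases j <;> simp [phaseSign]

theorem Pm_mul_apply (ξ : ℝ) (M : Matrix (Fin 2) (Fin 2) ℂ) (i j : Fin 2) :
    (Pm u₀ ξ * M) i j = Pm u₀ ξ i (i + 1) * M (i + 1) j := by
  fin_cases i <;> simp [Pm, Matrix.mul_apply, Fin.sum_univ_two]

theorem norm_Pm_apply_add_one (ξ : ℝ) (i : Fin 2) : ‖Pm u₀ ξ i (i + 1)‖ = ‖u₀ ξ‖ := by
  fin_cases i <;> simp [Pm]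

theorem continuous_Pm_apply (i j : Fin 2) : Continuous fun ξ => Pm u₀ ξ i j := by
  have hconj : Continuous fun ξ => -(starRingEnd ℂ) (u₀ ξ) :=
    (continuous_conj.comp u₀.continuous).neg
  fin_cases i <;> fin_cases j <;> simp [Pm, continuous_const, u₀.continuous, hconj]

theorem Km_apply (G : ℝ → Matrix (Fin 2) (Fin 2) ℂ) (x ξ : ℝ) (i j : Fin 2) :
    Km u₀ ζ G x ξ i j = phase ζ i j (x - ξ) * (Pm u₀ ξ * G ξ) i j := by
  have hexp (a b n : ℂ) : exp a * n * exp b = exp (a + b) * n := by rw [exp_add]; ring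
  rw [Km]
  generalize Pm u₀ ξ * G ξ = N
  rw [Matrix.eta_fin_two N]
  fin_cases i <;> fin_cases j <;> simp [phase, phaseSign, hexp] <;>
    exact Or.inl (by congr 1; ring)

theorem Km_sub (G₁ G₂ : ℝ → Matrix (Fin 2) (Fin 2) ℂ) (x ξ : ℝ) :
    Km u₀ ζ (G₁ - G₂) x ξ = Km u₀ ζ G₁ x ξ - Km u₀ ζ G₂ x ξ := by
  simp only [Km, Pi.sub_apply, mul_sub, sub_mul]

theorem norm_Km_apply (x ξ : ℝ) (i j : Fin 2) :
    ‖Km u₀ ζ G x ξ i j‖ = ‖u₀ ξ‖ * ‖G ξ (i + 1) j‖ := by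
  rw [Km_apply, Pm_mul_apply, norm_mul, norm_mul, norm_phase, norm_Pm_apply_add_one, one_mul]

theorem Km_apply_eq_phase_mul (x ξ : ℝ) (i j : Fin 2) :
    Km u₀ ζ G x ξ i j = phase ζ i j x * Km u₀ ζ G 0 ξ i j := by
  rw [Km_apply, Km_apply, ← mul_assoc, ← phase_add, zero_sub, ← sub_eq_add_neg]

theorem Km_apply_self (x : ℝ) (i j : Fin 2) : Km u₀ ζ G x x i j = (Pm u₀ x * G x) i j := by
  rw [Km_apply, sub_self, phase_zero, one_mul]

theorem continuous_Km_apply (hG : ∀ i j, Continuous fun ξ => G ξ i j) (x : ℝ) (i j : Fin 2) :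
    Continuous fun ξ => Km u₀ ζ G x ξ i j := by
  simp only [Km_apply, Pm_mul_apply]
  exact ((continuous_phase i j).comp (continuous_const.sub continuous_id)).mul
    ((continuous_Pm_apply i (i + 1)).mul (hG (i + 1) j))

theorem norm_Km_apply_le (hGM : ∀ ξ i j, ‖G ξ i j‖ ≤ M * tailWeight (‖u₀ ·‖) ξ)
    (x ξ : ℝ) (i j : Fin 2) :
    ‖Km u₀ ζ G x ξ i j‖ ≤ ‖u₀ ξ‖ * tailWeight (‖u₀ ·‖) ξ * M := by
  rw [norm_Km_apply, mul_assoc, mul_comm (tailWeight _ ξ)]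
  exact mul_le_mul_of_nonneg_left (hGM ξ (i + 1) j) (norm_nonneg _)

theorem integrable_Km (hG : ∀ i j, Continuous fun ξ => G ξ i j)
    (hGM : ∀ ξ i j, ‖G ξ i j‖ ≤ M * tailWeight (‖u₀ ·‖) ξ) (x : ℝ) (i j : Fin 2) :
    Integrable fun ξ => Km u₀ ζ G x ξ i j :=
  ((integrable_mul_tailWeight u₀.integrable.norm u₀.continuous.norm
    fun _ => norm_nonneg _).mul_const M).mono' (continuous_Km_apply hG x i j).aestronglyMeasurable
    (.of_forall fun ξ => norm_Km_apply_le hGM x ξ i j)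

theorem norm_volterraIntegral_le (hGM : ∀ ξ i j, ‖G ξ i j‖ ≤ M * tailWeight (‖u₀ ·‖) ξ)
    (x : ℝ) (i j : Fin 2) :
    ‖volterraIntegral u₀ ζ G x i j‖ ≤ M * ((tailWeight (‖u₀ ·‖) x - 1) / 2) := by
  calc ‖volterraIntegral u₀ ζ G x i j‖
      ≤ ∫ ξ in Ioi x, ‖u₀ ξ‖ * tailWeight (‖u₀ ·‖) ξ * M :=
        norm_integral_le_of_norm_le ((integrable_mul_tailWeight u₀.integrable.norm
          u₀.continuous.norm fun _ => norm_nonneg _).integrableOn.mul_const M)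
          (.of_forall fun ξ => norm_Km_apply_le hGM x ξ i j)
    _ = M * ((tailWeight (‖u₀ ·‖) x - 1) / 2) := by
        rw [integral_mul_const, integral_Ioi_mul_tailWeight u₀.integrable.norm
          u₀.continuous.norm fun _ => norm_nonneg _, mul_comm]

theorem hasDerivAt_volterraIntegral (hG : ∀ i j, Continuous fun ξ => G ξ i j)
    (hGM : ∀ ξ i j, ‖G ξ i j‖ ≤ M * tailWeight (‖u₀ ·‖) ξ) (x : ℝ) (i j : Fin 2) :
    HasDerivAt (fun x => volterraIntegral u₀ ζ G x i j)
      (phaseSign i j * (2 * I * ζ) * volterraIntegral u₀ ζ G x i j - (Pm u₀ x * G x) i j)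
      x := by
  have hfactor (y : ℝ) :
      volterraIntegral u₀ ζ G y i j = phase ζ i j y * ∫ ξ in Ioi y, Km u₀ ζ G 0 ξ i j := by
    rw [← integral_const_mul]
    exact integral_congr_ae (.of_forall fun ξ => Km_apply_eq_phase_mul y ξ i j)
  rw [funext hfactor]
  refine ((hasDerivAt_phase i j x).mul (hasDerivAt_integral_Ioi (integrable_Km hG hGM 0 i j)
    (continuous_Km_apply hG 0 i j) x)).congr_deriv ?_
  rw [hfactor, ← Km_apply_self x, Km_apply_eq_phase_mul x x]
  ring

theorem continuous_volterraIntegral (hG : ∀ i j, Continuous fun ξ => G ξ i j)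
    (hGM : ∀ ξ i j, ‖G ξ i j‖ ≤ M * tailWeight (‖u₀ ·‖) ξ) (i j : Fin 2) :
    Continuous fun x => volterraIntegral u₀ ζ G x i j :=
  continuous_iff_continuousAt.2 fun x => (hasDerivAt_volterraIntegral hG hGM x i j).continuousAt

theorem tendsto_volterraIntegral_atTop (hGM : ∀ ξ i j, ‖G ξ i j‖ ≤ M * tailWeight (‖u₀ ·‖) ξ)
    (i j : Fin 2) :
    Tendsto (fun x => volterraIntegral u₀ ζ G x i j) atTop (𝓝 0) := by
  refine squeeze_zero_norm (norm_volterraIntegral_le hGM · i j) ?_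
  simpa using
    (((tendsto_tailWeight_atTop u₀.integrable.norm).sub_const 1).div_const 2).const_mul M

theorem volterraIntegral_sub {x : ℝ} {i j : Fin 2}
    (hG : IntegrableOn (fun ξ => Km u₀ ζ G x ξ i j) (Ioi x))
    (hH : IntegrableOn (fun ξ => Km u₀ ζ H x ξ i j) (Ioi x)) :
    volterraIntegral u₀ ζ (H - G) x i j
      = volterraIntegral u₀ ζ H x i j - volterraIntegral u₀ ζ G x i j := by
  simp only [volterraIntegral, Matrix.of_apply, Km_sub, Matrix.sub_apply, integral_sub hH hG]

theorem _root_.IsMatrixVolterraSol.unique (hH : IsMatrixVolterraSol u₀ ζ H)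
    (hG : IsMatrixVolterraSol u₀ ζ G) {x : ℝ} (hx : 0 ≤ x) : H x = G x := by
  obtain ⟨hHc, ⟨CH, hCH⟩, hHeq⟩ := hH
  obtain ⟨hGc, ⟨CG, hCG⟩, hGeq⟩ := hG
  set f : ℝ → ℝ := fun x => ‖fun i j => H x i j - G x i j‖
  have hfc : ContinuousOn f (Ici 0) :=
    (continuousOn_pi.2 fun i => continuousOn_pi.2 fun j => (hHc i j).sub (hGc i j)).norm
  have hfC : ∀ x ≥ 0, f x ≤ CH + CG := fun x hx =>
    (pi_norm_le_iff_of_nonempty _).2 fun i => (pi_norm_le_iff_of_nonempty _).2 fun j =>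
      (norm_sub_le _ _).trans (add_le_add (hCH x hx i j) (hCG x hx i j))
  have hentry : ∀ x ≥ 0, ∀ i j, ‖H x i j - G x i j‖ ≤ ∫ ξ in Ioi x, ‖u₀ ξ‖ * f ξ := by
    intro x hx i j
    have hdiff : H x i j - G x i j = -volterraIntegral u₀ ζ (H - G) x i j := by
      rw [volterraIntegral_sub (hGeq x hx i j).1 (hHeq x hx i j).1, (hHeq x hx i j).2,
        (hGeq x hx i j).2]
      simp only [volterraIntegral, Matrix.of_apply]
      ring
    rw [hdiff, norm_neg]
    refine norm_integral_le_of_norm_le (integrableOn_Ioi_mul_of_bounded u₀.integrable.norm hfc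
      (fun ξ hξ => (norm_norm _).trans_le (hfC ξ hξ)) hx) (.of_forall fun ξ => ?_)
    rw [norm_Km_apply]
    exact mul_le_mul_of_nonneg_left
      ((norm_le_pi_norm (fun j => H ξ (i + 1) j - G ξ (i + 1) j) j).trans
        (norm_le_pi_norm (fun i j => H ξ i j - G ξ i j) (i + 1))) (norm_nonneg _)
  have hf_le : ∀ x ≥ 0, f x ≤ ∫ ξ in Ioi x, ‖u₀ ξ‖ * f ξ := fun x hx =>
    (pi_norm_le_iff_of_nonneg (integral_nonneg fun _ => by positivity)).2 fun i =>
      (pi_norm_le_iff_of_nonneg (integral_nonneg fun _ => by positivity)).2 (hentry x hx i)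
  have hzero : f x = 0 := eq_zero_of_le_integral_Ioi_mul u₀.integrable.norm u₀.continuous.norm
    (fun _ => norm_nonneg _) hfc (fun _ _ => norm_nonneg _) hfC hf_le hx
  ext i j
  exact sub_eq_zero.1 (norm_le_zero_iff.1 ((norm_le_pi_norm _ j).trans
    ((norm_le_pi_norm (fun i j => H x i j - G x i j) i).trans hzero.le)))

theorem adjugate_conjTranspose_Pm (ξ : ℝ) : (Pm u₀ ξ).adjugateᴴ = Pm u₀ ξ := by
  ext i j
  fin_cases i <;> fin_cases j <;> simp [Pm]

theorem adjugate_conjTranspose_diag_exp {a b : ℂ} (hab : (starRingEnd ℂ) b = a) :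
    (!![exp a, 0; 0, exp b]).adjugateᴴ = !![exp a, 0; 0, exp b] := by
  have hba : (starRingEnd ℂ) a = b := by rw [← hab, conj_conj]
  ext i j
  fin_cases i <;> fin_cases j <;> simp [← exp_conj, hab, hba]

theorem Km_adjugate_conjTranspose (x ξ : ℝ) :
    Km u₀ ζ (fun y => (G y).adjugateᴴ) x ξ = (Km u₀ ζ G x ξ).adjugateᴴ := by
  have himag :
      (starRingEnd ℂ) (I * ζ * ((x - ξ : ℝ) : ℂ)) = -(I * ζ * ((x - ξ : ℝ) : ℂ)) := by
    simp
  rw [Km, Km, adjugate_conjTranspose_mul, adjugate_conjTranspose_mul, adjugate_conjTranspose_mul,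
    adjugate_conjTranspose_Pm, adjugate_conjTranspose_diag_exp himag,
    adjugate_conjTranspose_diag_exp (by rw [map_neg, himag, neg_neg])]

theorem _root_.IsMatrixVolterraSol.adjugate_conjTranspose
    (hG : IsMatrixVolterraSol u₀ ζ G) :
    IsMatrixVolterraSol u₀ ζ fun x => (G x).adjugateᴴ := by
  obtain ⟨hGc, ⟨C, hC⟩, hGeq⟩ := hG
  have hKm (x ξ : ℝ) (i j : Fin 2) : Km u₀ ζ (fun y => (G y).adjugateᴴ) x ξ i j
      = (if i = j then 1 else -1) * star (Km u₀ ζ G x ξ (i + 1) (j + 1)) := by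
    rw [Km_adjugate_conjTranspose, adjugate_conjTranspose_apply_fin_two]
  refine ⟨fun i j => ?_, ⟨C, fun x hx i j => ?_⟩, fun x hx i j => ⟨?_, ?_⟩⟩
  · simp only [adjugate_conjTranspose_apply_fin_two]
    exact continuousOn_const.mul (continuous_star.comp_continuousOn (hGc _ _))
  · change ‖(G x).adjugateᴴ i j‖ ≤ C
    rw [adjugate_conjTranspose_apply_fin_two, norm_mul, norm_star]
    split_ifs <;> simpa using hC x hx _ _
  · simp only [hKm]
    have hint := (hGeq x hx (i + 1) (j + 1)).1
    exact (hint.norm.mono' (continuous_star.comp_aestronglyMeasurable hint.aestronglyMeasurable)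
      (.of_forall fun _ => by simp)).const_mul _
  · simp only [hKm, integral_const_mul, star_def, integral_conj]
    conv_rhs => rw [← adjugate_conjTranspose_one, adjugate_conjTranspose_apply_fin_two]
    rw [adjugate_conjTranspose_apply_fin_two, (hGeq x hx (i + 1) (j + 1)).2, star_def, map_sub]
    ring

noncomputable def ofWeighted (u₀ : SchwartzMap ℝ ℂ) (F : ℝ →ᵇ (Fin 2 → Fin 2 → ℂ)) (x : ℝ) :
    Matrix (Fin 2) (Fin 2) ℂ :=
  Matrix.of fun i j => (tailWeight (‖u₀ ·‖) x : ℂ) * F x i j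

theorem continuous_ofWeighted_apply (F : ℝ →ᵇ (Fin 2 → Fin 2 → ℂ)) (i j : Fin 2) :
    Continuous fun x => ofWeighted u₀ F x i j :=
  (continuous_ofReal.comp (continuous_tailWeight u₀.integrable.norm u₀.continuous.norm)).mul
    ((continuous_apply_apply i j).comp F.continuous)

theorem norm_ofWeighted_apply_le (F : ℝ →ᵇ (Fin 2 → Fin 2 → ℂ)) (x : ℝ) (i j : Fin 2) :
    ‖ofWeighted u₀ F x i j‖ ≤ ‖F‖ * tailWeight (‖u₀ ·‖) x := by
  rw [ofWeighted, of_apply, norm_mul, norm_real, Real.norm_of_nonneg (tailWeight_pos x).le,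
    mul_comm]
  exact mul_le_mul_of_nonneg_right (((norm_le_pi_norm _ j).trans (norm_le_pi_norm _ i)).trans
    (F.norm_coe_le_norm x)) (tailWeight_pos x).le

theorem ofWeighted_sub (F₁ F₂ : ℝ →ᵇ (Fin 2 → Fin 2 → ℂ)) :
    ofWeighted u₀ (F₁ - F₂) = ofWeighted u₀ F₁ - ofWeighted u₀ F₂ := by
  ext x i j
  simp [ofWeighted, mul_sub]

theorem norm_inv_tailWeight_mul_sub_le (F : ℝ →ᵇ (Fin 2 → Fin 2 → ℂ)) (c : ℂ) (x : ℝ)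
    (i j : Fin 2) :
    ‖(tailWeight (‖u₀ ·‖) x : ℂ)⁻¹ * (c - volterraIntegral u₀ ζ (ofWeighted u₀ F) x i j)‖
      ≤ ‖c‖ + ‖F‖ / 2 := by
  have hV := norm_volterraIntegral_le (ζ := ζ) (norm_ofWeighted_apply_le (u₀ := u₀) F) x i j
  have hρ := one_le_tailWeight (fun ξ => norm_nonneg (u₀ ξ)) x
  rw [norm_mul, norm_inv, norm_real, Real.norm_of_nonneg (tailWeight_pos x).le,
    inv_mul_le_iff₀ (tailWeight_pos x)]
  nlinarith [norm_sub_le c (volterraIntegral u₀ ζ (ofWeighted u₀ F) x i j), norm_nonneg c,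
    norm_nonneg F]

/-- The Volterra equation for `G = tailWeight · F`, solved for `F`. -/
noncomputable def weightedVolterraMap (u₀ : SchwartzMap ℝ ℂ) (ζ : ℝ)
    (F : ℝ →ᵇ (Fin 2 → Fin 2 → ℂ)) : ℝ →ᵇ (Fin 2 → Fin 2 → ℂ) :=
  BoundedContinuousFunction.ofNormedAddCommGroup
    (fun x i j => (tailWeight (‖u₀ ·‖) x : ℂ)⁻¹ *
      ((1 : Matrix (Fin 2) (Fin 2) ℂ) i j - volterraIntegral u₀ ζ (ofWeighted u₀ F) x i j))
    (continuous_pi fun i => continuous_pi fun j =>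
      ((continuous_ofReal.comp (continuous_tailWeight u₀.integrable.norm
        u₀.continuous.norm)).inv₀ fun x => ofReal_ne_zero.2 (tailWeight_pos x).ne').mul
        (continuous_const.sub (continuous_volterraIntegral (continuous_ofWeighted_apply F)
          (norm_ofWeighted_apply_le F) i j)))
    (1 + ‖F‖ / 2)
    (fun x => (pi_norm_le_iff_of_nonneg (by positivity)).2 fun i =>
      (pi_norm_le_iff_of_nonneg (by positivity)).2 fun j =>
        (norm_inv_tailWeight_mul_sub_le F _ x i j).trans (by
          gcongr
          rw [one_apply]
          split_ifs <;> simp))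

theorem weightedVolterraMap_apply (F : ℝ →ᵇ (Fin 2 → Fin 2 → ℂ)) (x : ℝ) (i j : Fin 2) :
    weightedVolterraMap u₀ ζ F x i j = (tailWeight (‖u₀ ·‖) x : ℂ)⁻¹ *
      ((1 : Matrix (Fin 2) (Fin 2) ℂ) i j - volterraIntegral u₀ ζ (ofWeighted u₀ F) x i j) :=
  rfl

theorem contractingWith_weightedVolterraMap :
    ContractingWith 2⁻¹ (weightedVolterraMap u₀ ζ) := by
  refine ⟨by norm_num, LipschitzWith.of_dist_le_mul fun F₁ F₂ =>
    (BoundedContinuousFunction.dist_le (by positivity)).2 fun x => ?_⟩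
  rw [dist_eq_norm]
  refine (pi_norm_le_iff_of_nonneg (by positivity)).2 fun i =>
    (pi_norm_le_iff_of_nonneg (by positivity)).2 fun j => ?_
  have hint (F : ℝ →ᵇ (Fin 2 → Fin 2 → ℂ)) :=
    (integrable_Km (ζ := ζ) (continuous_ofWeighted_apply (u₀ := u₀) F)
      (norm_ofWeighted_apply_le F) x i j).integrableOn (s := Ioi x)
  have hdiff : weightedVolterraMap u₀ ζ F₁ x i j - weightedVolterraMap u₀ ζ F₂ x i j
      = (tailWeight (‖u₀ ·‖) x : ℂ)⁻¹ *
          (0 - volterraIntegral u₀ ζ (ofWeighted u₀ (F₁ - F₂)) x i j) := by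
    rw [weightedVolterraMap_apply, weightedVolterraMap_apply, ofWeighted_sub,
      volterraIntegral_sub (hint F₂) (hint F₁)]
    ring
  calc ‖weightedVolterraMap u₀ ζ F₁ x i j - weightedVolterraMap u₀ ζ F₂ x i j‖
      ≤ ‖(0 : ℂ)‖ + ‖F₁ - F₂‖ / 2 := hdiff ▸ norm_inv_tailWeight_mul_sub_le _ 0 x i j
    _ = ((2⁻¹ : ℝ≥0) : ℝ) * dist F₁ F₂ := by
      rw [dist_eq_norm, norm_zero, zero_add, NNReal.coe_inv, NNReal.coe_ofNat, div_eq_inv_mul]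

theorem hasDerivAt_apply_of_eq_one_sub_volterraIntegral
    (hG : ∀ i j, Continuous fun ξ => G ξ i j)
    (hGM : ∀ ξ i j, ‖G ξ i j‖ ≤ M * tailWeight (‖u₀ ·‖) ξ)
    (heq : ∀ x i j, G x i j = (1 : Matrix (Fin 2) (Fin 2) ℂ) i j - volterraIntegral u₀ ζ G x i j)
    (x : ℝ) (i j : Fin 2) :
    HasDerivAt (fun x => G x i j)
      (phaseSign i j * (2 * I * ζ) * G x i j + (Pm u₀ x * G x) i j) x := by
  rw [funext fun y => heq y i j]
  refine ((hasDerivAt_volterraIntegral hG hGM x i j).const_sub _).congr_deriv ?_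
  linear_combination (-(phaseSign i j * (2 * I * ζ))) * heq x i j
    - (2 * I * ζ) * phaseSign_mul_one_apply i j

theorem det_eq_one_of_eq_one_sub_volterraIntegral (hG : ∀ i j, Continuous fun ξ => G ξ i j)
    (hGM : ∀ ξ i j, ‖G ξ i j‖ ≤ M * tailWeight (‖u₀ ·‖) ξ)
    (heq : ∀ x i j, G x i j = (1 : Matrix (Fin 2) (Fin 2) ℂ) i j - volterraIntegral u₀ ζ G x i j)
    (x : ℝ) : (G x).det = 1 := by
  have hderiv (x : ℝ) : HasDerivAt (fun x => (G x).det) 0 x := by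
    have h := hasDerivAt_apply_of_eq_one_sub_volterraIntegral hG hGM heq x
    simp only [det_fin_two]
    refine (((h 0 0).mul (h 1 1)).sub ((h 0 1).mul (h 1 0))).congr_deriv ?_
    simp only [Pm_mul_apply]
    simp [phaseSign, Pm]
    ring
  have hentry (i j : Fin 2) :
      Tendsto (fun x => G x i j) atTop (𝓝 ((1 : Matrix (Fin 2) (Fin 2) ℂ) i j)) := by
    simpa [← heq] using (tendsto_volterraIntegral_atTop (ζ := ζ) hGM i j).const_sub
      ((1 : Matrix (Fin 2) (Fin 2) ℂ) i j)
  have hlim : Tendsto (fun x => (G x).det) atTop (𝓝 1) := by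
    simpa [det_fin_two] using
      ((hentry 0 0).mul (hentry 1 1)).sub ((hentry 0 1).mul (hentry 1 0))
  refine tendsto_nhds_unique (tendsto_const_nhds.congr fun y => ?_) hlim
  exact is_const_of_deriv_eq_zero (fun y => (hderiv y).differentiableAt)
    (fun y => (hderiv y).deriv) x y

noncomputable def volterraSol (u₀ : SchwartzMap ℝ ℂ) (ζ : ℝ) : ℝ → Matrix (Fin 2) (Fin 2) ℂ :=
  ofWeighted u₀ (contractingWith_weightedVolterraMap.fixedPoint (weightedVolterraMap u₀ ζ))

theorem volterraSol_apply_eq (x : ℝ) (i j : Fin 2) :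
    volterraSol u₀ ζ x i j
      = (1 : Matrix (Fin 2) (Fin 2) ℂ) i j - volterraIntegral u₀ ζ (volterraSol u₀ ζ) x i j := by
  have hfix := congrArg (· x i j) (contractingWith_weightedVolterraMap.fixedPoint_isFixedPt
    (f := weightedVolterraMap u₀ ζ))
  simp only [weightedVolterraMap_apply] at hfix
  rw [volterraSol, ofWeighted, of_apply, ← hfix, ← mul_assoc,
    mul_inv_cancel₀ (ofReal_ne_zero.2 (tailWeight_pos x).ne'), one_mul]

theorem isMatrixVolterraSol_volterraSol : IsMatrixVolterraSol u₀ ζ (volterraSol u₀ ζ) :=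
  ⟨fun i j => (continuous_ofWeighted_apply _ i j).continuousOn,
    ⟨_, fun x _ i j => (norm_ofWeighted_apply_le _ x i j).trans (mul_le_mul_of_nonneg_left
      (tailWeight_le u₀.integrable.norm (fun _ => norm_nonneg _) x) (norm_nonneg _))⟩,
    fun x _ i j => ⟨(integrable_Km (continuous_ofWeighted_apply _) (norm_ofWeighted_apply_le _) x
      i j).integrableOn, volterraSol_apply_eq x i j⟩⟩

theorem det_volterraSol (x : ℝ) : (volterraSol u₀ ζ x).det = 1 :=
  det_eq_one_of_eq_one_sub_volterraIntegral (continuous_ofWeighted_apply _)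
    (norm_ofWeighted_apply_le _) volterraSol_apply_eq x

end MatrixVolterra

/-- for a Schwartz datum `u₀` and real spectral parameter `ζ`, the matrix
Volterra equation has a unique bounded continuous solution `G` on `[0,∞)`; it satisfies
`det G(x) = 1`, `G₁₁ = conj(G₂₂)` and `G₂₁ = −conj(G₁₂)`; consequently the spectral
functions `y(ζ) = G₂₂(0)` and `z(ζ) = G₁₂(0)` satisfy `|y(ζ)|² + |z(ζ)|² = 1`. -/
theorem stmt_18 (u₀ : SchwartzMap ℝ ℂ) (ζ : ℝ) :
    ∃ G : ℝ → Matrix (Fin 2) (Fin 2) ℂ,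
      IsMatrixVolterraSol u₀ (ζ : ℂ) G ∧
      (∀ H : ℝ → Matrix (Fin 2) (Fin 2) ℂ, IsMatrixVolterraSol u₀ (ζ : ℂ) H →
        ∀ x ≥ (0 : ℝ), H x = G x) ∧
      (∀ x ≥ (0 : ℝ), (G x).det = 1 ∧
        G x 0 0 = (starRingEnd ℂ) (G x 1 1) ∧ G x 1 0 = -(starRingEnd ℂ) (G x 0 1)) ∧
      ‖G 0 1 1‖ ^ 2 + ‖G 0 0 1‖ ^ 2 = 1 := by
  set G := MatrixVolterra.volterraSol u₀ ζ
  have hG : IsMatrixVolterraSol u₀ ζ G := MatrixVolterra.isMatrixVolterraSol_volterraSol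
  have hdet (x : ℝ) : (G x).det = 1 := MatrixVolterra.det_volterraSol x
  have hsymm (x : ℝ) (hx : 0 ≤ x) : (G x).adjugateᴴ = G x :=
    hG.adjugate_conjTranspose.unique hG hx
  refine ⟨G, hG, fun H hH x hx => hH.unique hG hx, fun x hx =>
    ⟨hdet x, apply_eq_of_adjugate_conjTranspose_eq (hsymm x hx)⟩, ?_⟩
  have h := hdet 0
  rw [det_eq_norm_sq_add_norm_sq (hsymm 0 le_rfl)] at h
  exact_mod_cast h
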